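/- Let G = (V,E,μ,w) be a weighted graph satisfying the 2-dimensional isoperimetric inequality with constant C_IS := inf { (w(∂Ω))²/μ(Ω) : Ω ⊆ V finite nonempty } > 0, and let u : V → ℝ be a solution of Δu + e^u = 0 whose superlevel sets Ω_σ = {x ∈ V : u(x) ≥ σ} are all finite and with Σ_{x∈V} e^{u(x)} μ_x < ∞. With G(σ) := Σ_{edges {x,y}∈E, u(x) < σ ≤ u(y)} w_{xy}/(u(y) − u(x)), one has ∫_{−∞}^{+∞} e^σ G(σ) (Σ_{x∈Ω_σ} e^{u(x)} μ_x) dσ ≥ C_IS · Σ_{x∈V} e^{u(x)} μ_x. -/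

import Mathlib

/-!
For each level `σ`, the isoperimetric inequality bounds `C_IS μ(Ω_σ)` by `w(∂Ω_σ)²`. Cauchy–Schwarz
over the boundary edges, weighted by the jumps `u y - u x > 0`, bounds this by `G(σ)` times the flux
`∑_{∂Ω_σ} w (u y - u x)`, and Green's formula together with `-Δu = eᵘ` turns the flux into
`∑_{Ω_σ} eᵘ μ`. Multiplying by `e^σ` and integrating, the layer-cake identity
`∫ e^σ μ(Ω_σ) dσ = ∑ₓ e^{u x} μₓ` gives the claim.
-/

open MeasureTheory Real Finset
open scoped ENNReal

theorem ENNReal.ofReal_tsum_le_tsum_ofReal {ι : Type*} {f : ι → ℝ} (hf : ∀ i, 0 ≤ f i) :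
    ENNReal.ofReal (∑' i, f i) ≤ ∑' i, ENNReal.ofReal (f i) := by
  by_cases hsum : Summable f
  · exact (ENNReal.ofReal_tsum_of_nonneg hf hsum).le
  · simp [tsum_eq_zero_of_not_summable hsum]

theorem lintegral_Iic_ofReal_exp (a : ℝ) :
    ∫⁻ σ in Set.Iic a, ENNReal.ofReal (exp σ) = ENNReal.ofReal (exp a) := by
  rw [← ofReal_integral_eq_lintegral_ofReal (integrableOn_exp_Iic a)
    (Filter.Eventually.of_forall fun σ => (exp_pos σ).le), integral_exp_Iic]

theorem countable_of_finite_superlevel {V : Type*} {u : V → ℝ}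
    (hfin : ∀ σ : ℝ, {x : V | σ ≤ u x}.Finite) : Countable V := by
  have hcover : (Set.univ : Set V) = ⋃ n : ℕ, {x | -(n : ℝ) ≤ u x} := by
    refine (Set.eq_univ_of_forall fun x => Set.mem_iUnion.mpr ?_).symm
    obtain ⟨n, hn⟩ := exists_nat_ge (-u x)
    exact ⟨n, show -(n : ℝ) ≤ u x by linarith⟩
  exact Set.countable_univ_iff.mp
    (hcover ▸ Set.countable_iUnion fun n => (hfin _).countable)

theorem lintegral_exp_mul_sum_superlevel {V : Type*} {u : V → ℝ}
    (hfin : ∀ σ : ℝ, {x : V | σ ≤ u x}.Finite) (m : V → ℝ≥0∞) :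
    ∫⁻ σ, ENNReal.ofReal (exp σ) * ∑ x ∈ (hfin σ).toFinset, m x
      = ∑' x, ENNReal.ofReal (exp (u x)) * m x := by
  have := countable_of_finite_superlevel hfin
  have hlayer : ∀ σ, ENNReal.ofReal (exp σ) * ∑ x ∈ (hfin σ).toFinset, m x
      = ∑' x, (Set.Iic (u x)).indicator (fun τ => ENNReal.ofReal (exp τ)) σ * m x := by
    intro σ
    rw [mul_sum, tsum_eq_sum (s := (hfin σ).toFinset) fun x hx => ?_]
    · refine sum_congr rfl fun x hx => ?_
      rw [Set.indicator_of_mem (by simpa using hx)]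
    · rw [Set.indicator_of_notMem (by simpa using hx), zero_mul]
  have hmeas : ∀ x, Measurable fun σ =>
      (Set.Iic (u x)).indicator (fun τ => ENNReal.ofReal (exp τ)) σ :=
    fun x => (measurable_exp.ennreal_ofReal).indicator measurableSet_Iic
  simp_rw [hlayer]
  rw [lintegral_tsum fun x => ((hmeas x).mul_const _).aemeasurable]
  refine tsum_congr fun x => ?_
  rw [lintegral_mul_const _ (hmeas x), lintegral_indicator measurableSet_Iic,
    lintegral_Iic_ofReal_exp]

namespace SimpleGraph

noncomputable section

variable {V : Type*} [DecidableEq V] (G : SimpleGraph V) [∀ v, Fintype (G.neighborSet v)]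

def edgeBoundaryWeight (w : V → V → ℝ) (Ω : Finset V) : ℝ :=
  ∑ x ∈ Ω, ∑ y ∈ (G.neighborFinset x).filter (fun y => y ∉ Ω), w x y

def isoperimetricConstant (w : V → V → ℝ) (μ : V → ℝ) : ℝ :=
  ⨅ Ω : {s : Finset V // s.Nonempty}, G.edgeBoundaryWeight w Ω.1 ^ 2 / ∑ x ∈ Ω.1, μ x

def laplacian (w : V → V → ℝ) (μ u : V → ℝ) (x : V) : ℝ :=
  (∑ y ∈ G.neighborFinset x, w x y * (u y - u x)) / μ x

/-- The edges of `∂Ω`, oriented from outside to inside. -/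
def boundaryPairs (Ω : Finset V) : Finset (V × V) :=
  Ω.biUnion fun y => ((G.neighborFinset y).filter (fun x => x ∉ Ω)).image fun x => (x, y)

/-- The paper's `G(σ)`. -/
def coareaDensity [DecidableRel G.Adj] (w : V → V → ℝ) (u : V → ℝ) (σ : ℝ) : ℝ :=
  ∑' p : V × V, if G.Adj p.1 p.2 ∧ u p.1 < σ ∧ σ ≤ u p.2 then w p.1 p.2 / (u p.2 - u p.1) else 0

variable {G}

theorem mem_boundaryPairs {Ω : Finset V} {p : V × V} :
    p ∈ G.boundaryPairs Ω ↔ G.Adj p.1 p.2 ∧ p.1 ∉ Ω ∧ p.2 ∈ Ω := by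
  obtain ⟨x, y⟩ := p
  simp only [boundaryPairs, mem_biUnion, mem_image, mem_filter, mem_neighborFinset,
    Prod.mk.injEq]
  constructor
  · rintro ⟨y, hy, x, ⟨hadj, hx⟩, rfl, rfl⟩
    exact ⟨hadj.symm, hx, hy⟩
  · rintro ⟨hadj, hx, hy⟩
    exact ⟨y, hy, x, ⟨hadj.symm, hx⟩, rfl, rfl⟩

theorem sum_boundaryPairs (Ω : Finset V) (f : V × V → ℝ) :
    ∑ p ∈ G.boundaryPairs Ω, f p
      = ∑ y ∈ Ω, ∑ x ∈ (G.neighborFinset y).filter (fun x => x ∉ Ω), f (x, y) :=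
  sum_finset_product_right _ _ _ fun p => by
    rw [mem_boundaryPairs, mem_filter, mem_neighborFinset, G.adj_comm p.2]
    tauto

theorem edgeBoundaryWeight_eq_sum_boundaryPairs {w : V → V → ℝ} (hw : ∀ x y, w x y = w y x)
    (Ω : Finset V) : G.edgeBoundaryWeight w Ω = ∑ p ∈ G.boundaryPairs Ω, w p.1 p.2 := by
  simp only [sum_boundaryPairs, edgeBoundaryWeight, hw]

theorem sum_sum_neighbor_mem_eq_zero {f : V → V → ℝ} (hf : ∀ x y, f x y = -f y x)
    (Ω : Finset V) :
    ∑ y ∈ Ω, ∑ x ∈ (G.neighborFinset y).filter (fun x => x ∈ Ω), f y x = 0 := by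
  classical
  have hS : ∑ y ∈ Ω, ∑ x ∈ (G.neighborFinset y).filter (fun x => x ∈ Ω), f y x
      = ∑ y ∈ Ω, ∑ x ∈ Ω, if G.Adj y x then f y x else 0 := by
    refine sum_congr rfl fun y _ => ?_
    rw [← sum_filter]
    congr 1
    ext x
    simp [and_comm]
  have hanti : ∑ y ∈ Ω, ∑ x ∈ Ω, (if G.Adj y x then f y x else 0)
      = -∑ y ∈ Ω, ∑ x ∈ Ω, if G.Adj y x then f y x else 0 := by
    conv_lhs => rw [sum_comm]
    simp only [← sum_neg_distrib]
    refine sum_congr rfl fun y _ => sum_congr rfl fun x _ => ?_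
    rw [G.adj_comm]
    split_ifs
    · exact hf _ _
    · simp
  linarith

theorem sum_boundaryPairs_flux {w : V → V → ℝ} (hw : ∀ x y, w x y = w y x) {μ : V → ℝ}
    (hμ : ∀ x, μ x ≠ 0) (u : V → ℝ) (Ω : Finset V) :
    ∑ p ∈ G.boundaryPairs Ω, w p.1 p.2 * (u p.2 - u p.1)
      = -∑ y ∈ Ω, G.laplacian w μ u y * μ y := by
  have hinner := sum_sum_neighbor_mem_eq_zero (G := G)
    (f := fun y x => w y x * (u y - u x)) (fun x y => by rw [hw]; ring) Ω
  simp only [laplacian, div_mul_cancel₀ _ (hμ _), ← sum_neg_distrib]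
  rw [sum_boundaryPairs]
  calc _ = ∑ y ∈ Ω, ((∑ x ∈ (G.neighborFinset y).filter (fun x => x ∈ Ω), w y x * (u y - u x))
        + ∑ x ∈ (G.neighborFinset y).filter (fun x => x ∉ Ω), w y x * (u y - u x)) := by
        rw [sum_add_distrib, hinner, zero_add]
        simp only [hw]
    _ = _ := by
        refine sum_congr rfl fun y _ => ?_
        rw [sum_filter_add_sum_filter_not]
        exact sum_congr rfl fun x _ => by ring

theorem isoperimetricConstant_mul_sum_le_sq {w : V → V → ℝ} {μ : V → ℝ} (hμ : ∀ x, 0 < μ x)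
    (Ω : Finset V) :
    G.isoperimetricConstant w μ * ∑ x ∈ Ω, μ x ≤ G.edgeBoundaryWeight w Ω ^ 2 := by
  rcases Ω.eq_empty_or_nonempty with rfl | hne
  · simpa using sq_nonneg _
  have hbdd : BddBelow (Set.range fun Ω : {s : Finset V // s.Nonempty} =>
      G.edgeBoundaryWeight w Ω.1 ^ 2 / ∑ x ∈ Ω.1, μ x) :=
    ⟨0, Set.forall_mem_range.mpr fun Ω =>
      div_nonneg (sq_nonneg _) (sum_nonneg fun x _ => (hμ x).le)⟩
  exact (le_div_iff₀ (sum_pos (fun x _ => hμ x) hne)).mp (ciInf_le hbdd ⟨Ω, hne⟩)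

theorem edgeBoundaryWeight_sq_le {w : V → V → ℝ} (hw_symm : ∀ x y, w x y = w y x)
    (hw_nonneg : ∀ x y, G.Adj x y → 0 ≤ w x y) {u : V → ℝ} {Ω : Finset V}
    (hu : ∀ p ∈ G.boundaryPairs Ω, u p.1 < u p.2) :
    G.edgeBoundaryWeight w Ω ^ 2
      ≤ (∑ p ∈ G.boundaryPairs Ω, w p.1 p.2 / (u p.2 - u p.1))
        * ∑ p ∈ G.boundaryPairs Ω, w p.1 p.2 * (u p.2 - u p.1) := by
  rw [edgeBoundaryWeight_eq_sum_boundaryPairs hw_symm]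
  refine sum_sq_le_sum_mul_sum_of_sq_le_mul _ (fun p hp => ?_) (fun p hp => ?_) fun p hp => ?_
  · exact div_nonneg (hw_nonneg _ _ (mem_boundaryPairs.mp hp).1) (sub_pos.mpr (hu p hp)).le
  · exact mul_nonneg (hw_nonneg _ _ (mem_boundaryPairs.mp hp).1) (sub_pos.mpr (hu p hp)).le
  · have hd := (sub_pos.mpr (hu p hp)).ne'
    exact le_of_eq (by field_simp)

variable [DecidableRel G.Adj]

theorem coareaDensity_eq_sum_boundaryPairs (w : V → V → ℝ) {u : V → ℝ}
    (hfin : ∀ σ : ℝ, {x : V | σ ≤ u x}.Finite) (σ : ℝ) :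
    G.coareaDensity w u σ
      = ∑ p ∈ G.boundaryPairs (hfin σ).toFinset, w p.1 p.2 / (u p.2 - u p.1) := by
  have hmem : ∀ p : V × V, p ∈ G.boundaryPairs (hfin σ).toFinset
      ↔ G.Adj p.1 p.2 ∧ u p.1 < σ ∧ σ ≤ u p.2 := fun p => by
    simp [mem_boundaryPairs]
  rw [coareaDensity, tsum_eq_sum fun p hp => if_neg (mt (hmem p).mpr hp)]
  exact sum_congr rfl fun p hp => if_pos ((hmem p).mp hp)

theorem isoperimetricConstant_mul_sum_superlevel_le {w : V → V → ℝ}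
    (hw_symm : ∀ x y, w x y = w y x) (hw_pos : ∀ x y, G.Adj x y → 0 < w x y) {μ : V → ℝ}
    (hμ_pos : ∀ x, 0 < μ x) {u : V → ℝ} (hu : ∀ x, G.laplacian w μ u x + exp (u x) = 0)
    (hfin : ∀ σ : ℝ, {x : V | σ ≤ u x}.Finite) (σ : ℝ) :
    G.isoperimetricConstant w μ * ∑ x ∈ (hfin σ).toFinset, μ x
      ≤ G.coareaDensity w u σ * ∑ x ∈ (hfin σ).toFinset, exp (u x) * μ x := by
  set Ω := (hfin σ).toFinset
  have hincr : ∀ p ∈ G.boundaryPairs Ω, u p.1 < u p.2 := fun p hp => by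
    obtain ⟨-, hout, hin⟩ := mem_boundaryPairs.mp hp
    simp only [Ω, Set.Finite.mem_toFinset, Set.mem_ofPred_eq, not_le] at hout hin
    exact hout.trans_le hin
  have hflux : ∑ p ∈ G.boundaryPairs Ω, w p.1 p.2 * (u p.2 - u p.1)
      = ∑ x ∈ Ω, exp (u x) * μ x := by
    rw [sum_boundaryPairs_flux hw_symm (fun x => (hμ_pos x).ne'), ← sum_neg_distrib]
    exact sum_congr rfl fun x _ => by rw [eq_neg_of_add_eq_zero_left (hu x), neg_mul, neg_neg]
  calc G.isoperimetricConstant w μ * ∑ x ∈ Ω, μ x ≤ G.edgeBoundaryWeight w Ω ^ 2 :=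
        isoperimetricConstant_mul_sum_le_sq hμ_pos Ω
    _ ≤ _ := edgeBoundaryWeight_sq_le hw_symm (fun x y h => (hw_pos x y h).le) hincr
    _ = _ := by rw [coareaDensity_eq_sum_boundaryPairs, hflux]

end

end SimpleGraph

open SimpleGraph in
theorem lintegral_exp_G_energy_ge_CIS_general
    {V : Type*} [DecidableEq V]
    (G : SimpleGraph V) [DecidableRel G.Adj] [∀ v, Fintype (G.neighborSet v)]
    (w : V → V → ℝ) (μ : V → ℝ)
    (hw_symm : ∀ x y, w x y = w y x)
    (hw_pos : ∀ x y, G.Adj x y → 0 < w x y)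
    (hμ_pos : ∀ x, 0 < μ x)
    (u : V → ℝ)
    (hu : ∀ x, (∑ y ∈ G.neighborFinset x, w x y * (u y - u x)) / μ x + Real.exp (u x) = 0)
    (hfin : ∀ σ : ℝ, {x : V | σ ≤ u x}.Finite) :
    ENNReal.ofReal
        ((⨅ Ω : {s : Finset V // s.Nonempty},
            (∑ x ∈ Ω.1, ∑ y ∈ (G.neighborFinset x).filter (fun y => y ∉ Ω.1), w x y) ^ 2
              / ∑ x ∈ Ω.1, μ x)
          * ∑' x, Real.exp (u x) * μ x)
      ≤ ∫⁻ σ : ℝ, ENNReal.ofReal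
          (Real.exp σ
            * (∑' p : V × V,
                if G.Adj p.1 p.2 ∧ u p.1 < σ ∧ σ ≤ u p.2
                then w p.1 p.2 / (u p.2 - u p.1) else 0)
            * ∑ x ∈ (hfin σ).toFinset, Real.exp (u x) * μ x) := by
  change ENNReal.ofReal (G.isoperimetricConstant w μ * ∑' x, exp (u x) * μ x)
    ≤ ∫⁻ σ, ENNReal.ofReal
      (exp σ * G.coareaDensity w u σ * ∑ x ∈ (hfin σ).toFinset, exp (u x) * μ x)
  set C := G.isoperimetricConstant w μ
  have hμ : ∀ x, 0 ≤ μ x := fun x => (hμ_pos x).le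
  calc ENNReal.ofReal (C * ∑' x, exp (u x) * μ x)
      = ENNReal.ofReal C * ENNReal.ofReal (∑' x, exp (u x) * μ x) :=
        ENNReal.ofReal_mul' (tsum_nonneg fun x => mul_nonneg (exp_pos _).le (hμ x))
    _ ≤ ENNReal.ofReal C * ∑' x, ENNReal.ofReal (exp (u x)) * ENNReal.ofReal (μ x) := by
        simp only [← ENNReal.ofReal_mul (exp_pos _).le]
        gcongr
        exact ENNReal.ofReal_tsum_le_tsum_ofReal fun x => mul_nonneg (exp_pos _).le (hμ x)
    _ = ∫⁻ σ, ENNReal.ofReal (exp σ * (C * ∑ x ∈ (hfin σ).toFinset, μ x)) := by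
        rw [← lintegral_exp_mul_sum_superlevel hfin,
          ← lintegral_const_mul' _ _ ENNReal.ofReal_ne_top]
        refine lintegral_congr fun σ => ?_
        rw [ENNReal.ofReal_mul (exp_pos σ).le, ENNReal.ofReal_mul' (sum_nonneg fun x _ => hμ x),
          ENNReal.ofReal_sum_of_nonneg fun x _ => hμ x, mul_left_comm]
    _ ≤ _ := lintegral_mono fun σ => ENNReal.ofReal_le_ofReal <| by
        rw [mul_assoc]
        exact mul_le_mul_of_nonneg_left
          (isoperimetricConstant_mul_sum_superlevel_le hw_symm hw_pos hμ_pos hu hfin σ)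
          (exp_pos σ).le

theorem lintegral_exp_G_energy_ge_CIS
    {V : Type*} [Nonempty V] [DecidableEq V]
    (G : SimpleGraph V) [DecidableRel G.Adj] [∀ v, Fintype (G.neighborSet v)]
    (w : V → V → ℝ) (μ : V → ℝ)
    (hw_symm : ∀ x y, w x y = w y x)
    (hw_pos : ∀ x y, G.Adj x y → 0 < w x y)
    (hμ_pos : ∀ x, 0 < μ x)
    (hIS : 0 < ⨅ Ω : {s : Finset V // s.Nonempty},
        (∑ x ∈ Ω.1, ∑ y ∈ (G.neighborFinset x).filter (fun y => y ∉ Ω.1), w x y) ^ 2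
          / ∑ x ∈ Ω.1, μ x)
    (u : V → ℝ)
    (hu : ∀ x, (∑ y ∈ G.neighborFinset x, w x y * (u y - u x)) / μ x + Real.exp (u x) = 0)
    (hfin : ∀ σ : ℝ, {x : V | σ ≤ u x}.Finite)
    (hsum : Summable fun x => Real.exp (u x) * μ x) :
    ENNReal.ofReal
        ((⨅ Ω : {s : Finset V // s.Nonempty},
            (∑ x ∈ Ω.1, ∑ y ∈ (G.neighborFinset x).filter (fun y => y ∉ Ω.1), w x y) ^ 2
              / ∑ x ∈ Ω.1, μ x)
          * ∑' x, Real.exp (u x) * μ x)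
      ≤ ∫⁻ σ : ℝ, ENNReal.ofReal
          (Real.exp σ
            * (∑' p : V × V,
                if G.Adj p.1 p.2 ∧ u p.1 < σ ∧ σ ≤ u p.2
                then w p.1 p.2 / (u p.2 - u p.1) else 0)
            * ∑ x ∈ (hfin σ).toFinset, Real.exp (u x) * μ x) :=
  lintegral_exp_G_energy_ge_CIS_general G w μ hw_symm hw_pos hμ_pos u hu hfin
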